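/- arXiv:2002.02263 — 2 statements merged into one kernel-verified Lean document; each statement's English description precedes it below -/
import Mathlib

section
/- Let F, G : ℝ → ℝ be convex functions with the same global minimum value β, attained by G at a point a and by F at a point b with a ≤ b. Assume moreover that G(x) ≤ F(x) for all x ≤ a and F(x) ≤ G(x) for all x ≥ b. Then the lower convex envelope of min(F, G) equals G(x) for x ≤ a, equals β for a ≤ x ≤ b, and equals F(x) for x ≥ b. -/
/-!
A convex minorant of `min F G` is at most `β` at `a` and at `b`, hence at most `β` on `[a, b]`;
and it is at most `G` left of `a` and at most `F` right of `b`. All three bounds are attained by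
convex minorants: the constant `β`, and `G` (resp. `F`) flattened to the constant `β` to the right
of its minimiser `a` (resp. to the left of its minimiser `b`). Flattening keeps convexity because a
convex function is antitone to the left and monotone to the right of a minimiser.
-/

noncomputable def lowerConvexEnv (h : ℝ → ℝ) (p : ℝ) : ℝ :=
  sSup {y : ℝ | ∃ g : ℝ → ℝ, ConvexOn ℝ Set.univ g ∧ (∀ x, g x ≤ h x) ∧ y = g p}

open Set

namespace ConvexOn

variable {s : Set ℝ} {f : ℝ → ℝ} {a : ℝ}

theorem antitoneOn_of_isMinOn (hf : ConvexOn ℝ s f) (ha : a ∈ s) (hmin : IsMinOn f s a) :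
    AntitoneOn f (s ∩ Iic a) := by
  intro u ⟨hu, _⟩ v ⟨hv, hva⟩ huv
  have hseg : v ∈ segment ℝ u a := by
    rw [segment_eq_Icc (huv.trans hva)]
    exact ⟨huv, hva⟩
  exact (hf.le_on_segment hu ha hseg).trans (max_le le_rfl (hmin hu))

theorem monotoneOn_of_isMinOn (hf : ConvexOn ℝ s f) (ha : a ∈ s) (hmin : IsMinOn f s a) :
    MonotoneOn f (s ∩ Ici a) := by
  intro u ⟨_, hau⟩ v ⟨hv, _⟩ huv
  have hseg : u ∈ segment ℝ a v := by
    rw [segment_eq_Icc (hau.trans huv)]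
    exact ⟨hau, huv⟩
  exact (hf.le_on_segment ha hv hseg).trans (max_le (hmin hv) le_rfl)

theorem piecewise_Iic_self_const (hf : ConvexOn ℝ univ f) (hmin : IsMinOn f univ a) :
    ConvexOn ℝ univ ((Iic a).piecewise f fun _ => f a) :=
  convexOn_univ_piecewise_Iic_of_antitoneOn_Iic_monotoneOn_Ici (hf.subset (subset_univ _)
    (convex_Iic a)) (convexOn_const _ (convex_Ici a))
    (by simpa using hf.antitoneOn_of_isMinOn (mem_univ a) hmin) monotoneOn_const rfl

theorem piecewise_Ici_self_const (hf : ConvexOn ℝ univ f) (hmin : IsMinOn f univ a) :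
    ConvexOn ℝ univ ((Ici a).piecewise f fun _ => f a) :=
  convexOn_univ_piecewise_Ici_of_monotoneOn_Ici_antitoneOn_Iic (hf.subset (subset_univ _)
    (convex_Ici a)) (convexOn_const _ (convex_Iic a))
    (by simpa using hf.monotoneOn_of_isMinOn (mem_univ a) hmin) antitoneOn_const rfl

end ConvexOn

section lowerConvexEnv

variable {h g : ℝ → ℝ} {p : ℝ}

theorem lowerConvexEnv_eq_of_forall_le (hg : ConvexOn ℝ univ g) (hgh : ∀ x, g x ≤ h x)
    (hmax : ∀ g', ConvexOn ℝ univ g' → (∀ x, g' x ≤ h x) → g' p ≤ g p) :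
    lowerConvexEnv h p = g p :=
  IsGreatest.csSup_eq ⟨⟨g, hg, hgh, rfl⟩, by rintro _ ⟨g', hg', hg'h, rfl⟩; exact hmax g' hg' hg'h⟩

theorem lowerConvexEnv_eq_of_minorant_eq (hg : ConvexOn ℝ univ g) (hgh : ∀ x, g x ≤ h x)
    (hgp : g p = h p) : lowerConvexEnv h p = h p :=
  hgp ▸ lowerConvexEnv_eq_of_forall_le hg hgh fun _ _ hg'h => hgp ▸ hg'h p

end lowerConvexEnv

theorem convex_env_of_min_two_convex
    (F G : ℝ → ℝ) (β a b : ℝ)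
    (hF : ConvexOn ℝ Set.univ F) (hG : ConvexOn ℝ Set.univ G)
    (hFmin : ∀ x, β ≤ F x) (hGmin : ∀ x, β ≤ G x)
    (hGa : G a = β) (hFb : F b = β) (hab : a ≤ b)
    (hGF : ∀ x ≤ a, G x ≤ F x) (hFG : ∀ x, b ≤ x → F x ≤ G x) :
    (∀ x ≤ a, lowerConvexEnv (fun p => min (F p) (G p)) x = G x) ∧
    (∀ x, a ≤ x → x ≤ b → lowerConvexEnv (fun p => min (F p) (G p)) x = β) ∧
    (∀ x, b ≤ x → lowerConvexEnv (fun p => min (F p) (G p)) x = F x) := by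
  have hβ : ∀ x, β ≤ min (F x) (G x) := fun x => le_min (hFmin x) (hGmin x)
  have hGmin' : IsMinOn G univ a := fun x _ => hGa ▸ hGmin x
  have hFmin' : IsMinOn F univ b := fun x _ => hFb ▸ hFmin x
  refine ⟨fun x hx => ?_, fun x hax hxb => ?_, fun x hx => ?_⟩
  · have hGx : min (F x) (G x) = G x := min_eq_right (hGF x hx)
    refine hGx ▸ lowerConvexEnv_eq_of_minorant_eq (hG.piecewise_Iic_self_const hGmin')
      (fun y => ?_) (by simp [hx, hGx])
    by_cases hy : y ≤ a
    · simpa [hy] using hGF y hy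
    · simpa [hy, hGa] using hβ y
  · refine lowerConvexEnv_eq_of_forall_le (g := fun _ => β) (convexOn_const β convex_univ) hβ
      fun g hg hgh => ?_
    have hseg : x ∈ segment ℝ a b := by
      rw [segment_eq_Icc hab]
      exact ⟨hax, hxb⟩
    have hga : g a ≤ β := (hgh a).trans (hGa ▸ min_le_right _ _)
    have hgb : g b ≤ β := (hgh b).trans (hFb ▸ min_le_left _ _)
    exact (hg.le_on_segment (mem_univ a) (mem_univ b) hseg).trans (max_le hga hgb)
  · have hFx : min (F x) (G x) = F x := min_eq_left (hFG x hx)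
    refine hFx ▸ lowerConvexEnv_eq_of_minorant_eq (hF.piecewise_Ici_self_const hFmin')
      (fun y => ?_) (by simp [hx, hFx])
    by_cases hy : b ≤ y
    · simpa [hy] using hFG y hy
    · simpa [hy, hFb] using hβ y
end

section
/- Let a, V : ℝ → [0,1] be continuous, G : ℝ → [0,∞), θ ∈ ℝ, β ≥ 0, h ∈ (0,1), ε > 0, δ ∈ (0,1), ℓ₁ < x₀ < ℓ₂, and y > 0. Define χ(x) = ∫_{x₀}^{x} 1/(a(r) ∨ δ) dr and v(t,x) = θx - ε∫_{x₀}^{x} χ(s) ds + (βh - ε)t. Assume: (i) V(x) ≥ h for all x ∈ [ℓ₁, ℓ₂]; (ii) G(θ - ε p) ≥ βh whenever |p| ≥ y; (iii) |χ(x)| ≥ y for all x ∉ [ℓ₁, ℓ₂]. Then v is a classical subsolution: for all t > 0 and x ∈ ℝ, ∂_t v ≤ a(x)·∂²_{xx} v + G(∂_x v) + β V(x). -/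
/-!
The derivatives of `v` are explicit: `∂ₜv = βh - ε`, `∂ₓv = θ - εχ` and `∂ₓₓv = -ε / (a ∨ δ)`,
so `a ∂ₓₓv ≥ -ε` and the `-ε` in `∂ₜv` absorbs the diffusion. The remaining `βh` is paid by
`βV ≥ βh` on the hill `[ℓ₁, ℓ₂]` and by `G(θ - εχ) ≥ βh` off it, where `|χ| ≥ y`.
-/

lemma continuous_inv_max_const {a : ℝ → ℝ} (ha : Continuous a) {δ : ℝ} (hδ : 0 < δ) :
    Continuous fun r => (max (a r) δ)⁻¹ :=
  (ha.max continuous_const).inv₀ fun _ => (hδ.trans_le (le_max_right _ _)).ne'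

lemma neg_le_mul_neg_mul_inv_max {ε δ : ℝ} (hε : 0 ≤ ε) (hδ : 0 < δ) (a : ℝ) :
    -ε ≤ a * -(ε * (max a δ)⁻¹) := by
  have hm : 0 < max a δ := hδ.trans_le (le_max_right _ _)
  have : a * (max a δ)⁻¹ ≤ 1 := by
    rw [← div_eq_mul_inv, div_le_one hm]
    exact le_max_left _ _
  nlinarith

lemma hasDerivAt_affine_sub_integral {f : ℝ → ℝ} (hf : Continuous f) (θ ε c x₀ z : ℝ) :
    HasDerivAt (fun x => θ * x - ε * (∫ s in x₀..x, f s) + c) (θ - ε * f z) z := by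
  simpa using (((hasDerivAt_id z).const_mul θ).sub
    ((hf.integral_hasStrictDerivAt x₀ z).hasDerivAt.const_mul ε)).add_const c

lemma deriv_affine_sub_integral {f : ℝ → ℝ} (hf : Continuous f) (θ ε c x₀ : ℝ) :
    deriv (fun x => θ * x - ε * (∫ s in x₀..x, f s) + c) = fun z => θ - ε * f z :=
  funext fun z => (hasDerivAt_affine_sub_integral hf θ ε c x₀ z).deriv

theorem subsolution_with_hill_general
    (a V : ℝ → ℝ) (G : ℝ → ℝ) (θ β h ε δ ℓ₁ x₀ ℓ₂ y : ℝ)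
    (ha : Continuous a)
    (hV01 : ∀ x, V x ∈ Set.Icc (0:ℝ) 1)
    (hGnonneg : ∀ p, 0 ≤ G p)
    (hβ : 0 ≤ β) (hε : 0 < ε) (hδ : δ ∈ Set.Ioo (0:ℝ) 1)
    (χ : ℝ → ℝ) (hχ : χ = fun x => ∫ r in x₀..x, (max (a r) δ)⁻¹)
    (v : ℝ → ℝ → ℝ)
    (hv : v = fun t x => θ * x - ε * (∫ s in x₀..x, χ s) + (β * h - ε) * t)
    (hhill : ∀ x ∈ Set.Icc ℓ₁ ℓ₂, h ≤ V x)
    (hcoer : ∀ p : ℝ, y ≤ |p| → β * h ≤ G (θ - ε * p))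
    (hχout : ∀ x, x ∉ Set.Icc ℓ₁ ℓ₂ → y ≤ |χ x|) :
    ∀ t > (0:ℝ), ∀ x : ℝ,
      deriv (fun t' => v t' x) t ≤
        a x * deriv (deriv (fun x' => v t x')) x +
          G (deriv (fun x' => v t x') x) + β * V x := by
  intro t _ x
  have hχd : ∀ z, HasDerivAt χ (max (a z) δ)⁻¹ z := fun z => by
    rw [hχ]
    exact ((continuous_inv_max_const ha hδ.1).integral_hasStrictDerivAt x₀ z).hasDerivAt
  have hχc : Continuous χ := continuous_iff_continuousAt.2 fun z => (hχd z).continuousAt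
  have hdt : deriv (fun t' => v t' x) t = β * h - ε := by
    subst hv
    simp
  have hdx : deriv (fun x' => v t x') = fun z => θ - ε * χ z := by
    subst hv
    exact deriv_affine_sub_integral hχc θ ε _ x₀
  have hdxx : deriv (deriv fun x' => v t x') x = -(ε * (max (a x) δ)⁻¹) := by
    rw [hdx]
    exact (((hχd x).const_mul ε).const_sub θ).deriv
  rw [hdt, hdxx, hdx]
  have hdiffusion := neg_le_mul_neg_mul_inv_max hε.le hδ.1 (a x)
  by_cases hx : x ∈ Set.Icc ℓ₁ ℓ₂
  · have := hGnonneg (θ - ε * χ x)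
    have := mul_le_mul_of_nonneg_left (hhill x hx) hβ
    linarith
  · have := hcoer (χ x) (hχout x hx)
    have := mul_nonneg hβ (hV01 x).1
    linarith

theorem subsolution_with_hill
    (a V : ℝ → ℝ) (G : ℝ → ℝ) (θ β h ε δ ℓ₁ x₀ ℓ₂ y : ℝ)
    (ha : Continuous a) (hVc : Continuous V)
    (ha01 : ∀ x, a x ∈ Set.Icc (0:ℝ) 1) (hV01 : ∀ x, V x ∈ Set.Icc (0:ℝ) 1)
    (hGnonneg : ∀ p, 0 ≤ G p)
    (hβ : 0 ≤ β) (hh : h ∈ Set.Ioo (0:ℝ) 1) (hε : 0 < ε) (hδ : δ ∈ Set.Ioo (0:ℝ) 1)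
    (hord : ℓ₁ < x₀ ∧ x₀ < ℓ₂) (hy : 0 < y)
    (χ : ℝ → ℝ) (hχ : χ = fun x => ∫ r in x₀..x, (max (a r) δ)⁻¹)
    (v : ℝ → ℝ → ℝ)
    (hv : v = fun t x => θ * x - ε * (∫ s in x₀..x, χ s) + (β * h - ε) * t)
    (hhill : ∀ x ∈ Set.Icc ℓ₁ ℓ₂, h ≤ V x)
    (hcoer : ∀ p : ℝ, y ≤ |p| → β * h ≤ G (θ - ε * p))
    (hχout : ∀ x, x ∉ Set.Icc ℓ₁ ℓ₂ → y ≤ |χ x|) :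
    ∀ t > (0:ℝ), ∀ x : ℝ,
      deriv (fun t' => v t' x) t ≤
        a x * deriv (deriv (fun x' => v t x')) x +
          G (deriv (fun x' => v t x') x) + β * V x :=
  subsolution_with_hill_general a V G θ β h ε δ ℓ₁ x₀ ℓ₂ y ha hV01 hGnonneg hβ hε hδ χ hχ v hv hhill
    hcoer hχout
end
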